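/- arXiv:1709.03152 — 6 statements merged into one kernel-verified Lean document; each statement's English description precedes it below -/
import Mathlib

section
/- Let n ≥ 1 and let μ₁, …, μₙ be finite measures on the interval [0,1], each absolutely continuous with respect to Lebesgue measure, such that μᵢ([0,1]) = D for every i, where D is a positive real number. Let d₁, …, dₙ be positive real numbers with d₁ + ⋯ + dₙ = D. Then there exists a measurable partition X₁, …, Xₙ of [0,1] (the Xᵢ are pairwise disjoint measurable sets whose union is [0,1]) such that μᵢ(Xᵢ) ≥ dᵢ for every i. -/
/-!
Induct on the set `s` of players still to be served, each of whom values the remaining cake `S`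
at least `R`, the total demand of `s`. Condition every measure on `S` and compare densities with
respect to Lebesgue measure: on the set where player `i` has the largest density, `i` values every
piece at least as much as anyone else does. These sets cover `S`, so some player `i` values her own
set at least `d i / R`. Her measure has no atoms, so she can cut from that set a piece worth exactly
`d i / R` of `S` to her, hence worth at most that fraction to everybody else, who therefore keep
value at least `R - d i` of what is left.
-/

open MeasureTheory Set Filter Topology ProbabilityTheory Function
open scoped ENNReal

theorem Set.pairwise_disjoint_update_union {α ι : Type*} [DecidableEq ι] {Y : ι → Set α}
    (hY : Pairwise (Disjoint on Y)) {A : Set α} (hA : ∀ j, Disjoint A (Y j)) (i : ι) :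
    Pairwise (Disjoint on update Y i (Y i ∪ A)) := by
  intro j k hjk
  simp only [onFun, update_apply]
  split_ifs with hj hk hk
  · exact absurd (hj.trans hk.symm) hjk
  · exact disjoint_union_left.2 ⟨hj ▸ hY hjk, hA k⟩
  · exact disjoint_union_right.2 ⟨hk ▸ hY hjk, (hA j).symm⟩
  · exact hY hjk

theorem Set.iUnion_update_union {α ι : Type*} [DecidableEq ι] (Y : ι → Set α) (A : Set α)
    (i : ι) : ⋃ j, update Y i (Y i ∪ A) j = (⋃ j, Y j) ∪ A := by
  ext x
  simp only [mem_iUnion, mem_union, update_apply]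
  constructor
  · rintro ⟨j, hj⟩
    split_ifs at hj with h
    · exact hj.imp (fun hx => ⟨i, hx⟩) id
    · exact .inl ⟨j, hj⟩
  · rintro (⟨j, hj⟩ | hx)
    · by_cases h : j = i
      · exact ⟨i, by simp [h ▸ hj]⟩
      · exact ⟨j, by simp [h, hj]⟩
    · exact ⟨i, by simp [hx]⟩

theorem ENNReal.sub_mul_le_sub_of_le_mul {R M w a : ℝ≥0∞} (hR : R ≠ ∞) (hM : M ≠ ∞)
    (hRM : R ≤ M) (ha : a ≤ w * M) : R - w * R ≤ M - a := calc
  R - w * R = (1 - w) * R := by rw [ENNReal.sub_mul fun _ _ => hR, one_mul]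
  _ ≤ (1 - w) * M := by gcongr
  _ = M - w * M := by rw [ENNReal.sub_mul fun _ _ => hM, one_mul]
  _ ≤ M - a := by gcongr

namespace MeasureTheory

theorem Measure.AbsolutelyContinuous.nullSingletonClass {α : Type*} [MeasurableSpace α]
    {μ ν : Measure α} [NullSingletonClass ν] (h : μ ≪ ν) : NullSingletonClass μ :=
  ⟨fun x => h (measure_singleton x)⟩

section Real

variable {μ : Measure ℝ} [IsFiniteMeasure μ]

theorem continuous_measureReal_Iic [NullSingletonClass μ] :
    Continuous fun t => μ.real (Iic t) := by
  have h : ∀ t, μ.real (Iic t) = μ.real (Iic 0) + ∫ _ in (0 : ℝ)..t, (1 : ℝ) ∂μ := by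
    intro t
    rw [← intervalIntegral.integral_Iic_sub_Iic (integrableOn_const (by simp))
      (integrableOn_const (by simp))]
    simp only [setIntegral_const, smul_eq_mul, mul_one]
    ring
  rw [funext h]
  exact continuous_const.add ((integrable_const 1).continuous_primitive 0)

theorem tendsto_measureReal_Iic_atBot : Tendsto (fun t => μ.real (Iic t)) atBot (𝓝 0) := by
  have h := tendsto_measure_iInter_atBot (μ := μ) (fun _ => measurableSet_Iic.nullMeasurableSet)
    monotone_Iic ⟨0, measure_ne_top μ _⟩
  rw [iInter_eq_empty_iff.mpr fun x => ⟨x - 1, by simp⟩, measure_empty] at h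
  have := (ENNReal.tendsto_toReal ENNReal.zero_ne_top).comp h
  rwa [ENNReal.toReal_zero] at this

theorem tendsto_measureReal_Iic_atTop :
    Tendsto (fun t => μ.real (Iic t)) atTop (𝓝 (μ.real univ)) :=
  (ENNReal.tendsto_toReal (measure_ne_top μ _)).comp (tendsto_measure_Iic_atTop μ)

theorem exists_subset_measure_eq [NullSingletonClass μ] {E : Set ℝ} (hE : MeasurableSet E)
    {c : ℝ≥0∞} (hc : c ≤ μ E) : ∃ A ⊆ E, MeasurableSet A ∧ μ A = c := by
  rcases eq_or_ne c 0 with rfl | hc0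
  · exact ⟨∅, empty_subset E, .empty, measure_empty⟩
  rcases hc.eq_or_lt with rfl | hcE
  · exact ⟨E, subset_rfl, hE, rfl⟩
  set ν := μ.restrict E
  have hctop : c ≠ ∞ := (hcE.trans_le le_top).ne
  have hcν : 0 < c.toReal ∧ c.toReal < ν.real univ := by
    refine ⟨ENNReal.toReal_pos hc0 hctop, ?_⟩
    rw [measureReal_restrict_apply_univ]
    exact ENNReal.toReal_strict_mono (measure_ne_top μ E) hcE
  obtain ⟨t, ht : ν.real (Iic t) = c.toReal⟩ : c.toReal ∈ range fun t => ν.real (Iic t) :=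
    mem_range_of_exists_le_of_exists_ge continuous_measureReal_Iic
      (tendsto_measureReal_Iic_atBot.eventually (ge_mem_nhds hcν.1)).exists
      (tendsto_measureReal_Iic_atTop.eventually (le_mem_nhds hcν.2)).exists
  refine ⟨E ∩ Iic t, inter_subset_left, hE.inter measurableSet_Iic, ?_⟩
  rw [← ENNReal.ofReal_toReal hctop, ← ht, measureReal_def,
    ENNReal.ofReal_toReal (measure_ne_top _ _), Measure.restrict_apply measurableSet_Iic,
    inter_comm]

end Real

theorem exists_dominating_set_of_sum_le {α ι : Type*} [MeasurableSpace α] {ν : Measure α}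
    {P : ι → Measure α} [∀ i, (P i).HaveLebesgueDecomposition ν] (hP : ∀ i, P i ≪ ν)
    {s : Finset ι} {w : ι → ℝ≥0∞} {j : ι} (hj : j ∈ s)
    (hw : ∑ i ∈ s, w i ≤ P j univ) :
    ∃ i ∈ s, ∃ E, MeasurableSet E ∧ w i ≤ P i E ∧
      ∀ k ∈ s, (P k).restrict E ≤ (P i).restrict E := by
  set f := fun i => (P i).rnDeriv ν
  set Q := fun i => {x | ∀ k ∈ s, f k x ≤ f i x}
  have hQ : ∀ i, MeasurableSet (Q i) := fun i => by
    simp only [Q, ofPred_forall]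
    exact .biInter s.countable_toSet fun k _ =>
      measurableSet_le (Measure.measurable_rnDeriv _ _) (Measure.measurable_rnDeriv _ _)
  have hdom : ∀ i, ∀ k ∈ s, (P k).restrict (Q i) ≤ (P i).restrict (Q i) := by
    intro i k hk
    rw [← Measure.withDensity_rnDeriv_eq _ _ (hP k),
      ← Measure.withDensity_rnDeriv_eq _ _ (hP i), restrict_withDensity (hQ i),
      restrict_withDensity (hQ i)]
    exact withDensity_mono (ae_restrict_of_forall_mem (hQ i) fun x hx => hx k hk)
  have hcover : univ ⊆ ⋃ i ∈ s, Q i := fun x _ => by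
    obtain ⟨i, hi, hmax⟩ := s.exists_max_image (f · x) ⟨j, hj⟩
    exact mem_biUnion hi hmax
  have hsum : ∑ i ∈ s, w i ≤ ∑ i ∈ s, P i (Q i) := calc
    ∑ i ∈ s, w i ≤ P j univ := hw
    _ ≤ ∑ i ∈ s, P j (Q i) := (measure_mono hcover).trans (measure_biUnion_finset_le _ _)
    _ ≤ ∑ i ∈ s, P i (Q i) := Finset.sum_le_sum fun i _ => by
      simpa [Measure.restrict_apply_self] using hdom i j hj (Q i)
  obtain ⟨i, hi, hwi⟩ := ENNReal.exists_le_of_sum_le ⟨j, hj⟩ hsum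
  exact ⟨i, hi, Q i, hQ i, hwi, hdom i⟩

end MeasureTheory

namespace CakeCutting

theorem exists_piece_of_sum_le {ι : Type*} {μ : ι → Measure ℝ} (hac : ∀ i, μ i ≪ volume)
    {d : ι → ℝ≥0∞} {s : Finset ι} (hs : s.Nonempty) {S : Set ℝ} (hS : MeasurableSet S)
    (hfin : ∀ i ∈ s, μ i S ≠ ∞) (hval : ∀ i ∈ s, ∑ k ∈ s, d k ≤ μ i S) :
    ∃ i ∈ s, ∃ A ⊆ S, MeasurableSet A ∧ d i ≤ μ i A ∧
      ∀ j ∈ s, ∑ k ∈ s, d k - d i ≤ μ j (S \ A) := by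
  set R := ∑ k ∈ s, d k
  obtain ⟨j₀, hj₀⟩ := hs
  have hR : R ≠ ∞ := ne_top_of_le_ne_top (hfin j₀ hj₀) (hval j₀ hj₀)
  rcases eq_or_ne R 0 with hR0 | hR0
  · have hd : d j₀ = 0 := le_zero_iff.1 (hR0 ▸ Finset.single_le_sum (fun _ _ => zero_le) hj₀)
    refine ⟨j₀, hj₀, ∅, empty_subset S, .empty, by simp [hd], fun j _ => by simp [hR0]⟩
  set P := fun k => (μ k)[|S]
  have hP : P j₀ univ = 1 := by
    rw [cond_apply hS, inter_univ, ENNReal.inv_mul_cancel _ (hfin j₀ hj₀)]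
    exact (pos_iff_ne_zero.2 hR0 |>.trans_le (hval j₀ hj₀)).ne'
  have hw : ∑ k ∈ s, d k / R = P j₀ univ := by
    rw [hP, ← ENNReal.div_self hR0 hR]
    simp only [div_eq_mul_inv, ← Finset.sum_mul, R]
  obtain ⟨i, hi, E, hE, hwE, hdom⟩ :=
    exists_dominating_set_of_sum_le (fun k => cond_absolutelyContinuous.trans (hac k)) hj₀ hw.le
  have : NullSingletonClass (P i) := (cond_absolutelyContinuous.trans (hac i)).nullSingletonClass
  obtain ⟨A, hASE, hA, hPA⟩ := exists_subset_measure_eq (μ := P i) (hS.inter hE)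
    (c := d i / R) (by rwa [cond_inter_self hS])
  have hAS : A ⊆ S := hASE.trans inter_subset_left
  have hμA : ∀ k ∈ s, μ k A = P k A * μ k S := fun k hk => by
    rw [cond_mul_eq_inter' hS (hfin k hk), inter_eq_right.2 hAS]
  have hPA_le : ∀ k ∈ s, P k A ≤ d i / R := fun k hk => by
    have h := hdom k hk A
    rwa [Measure.restrict_apply hA, Measure.restrict_apply hA,
      inter_eq_left.2 (hASE.trans inter_subset_right), hPA] at h
  have hdiR : d i / R * R = d i := ENNReal.div_mul_cancel hR0 hR
  refine ⟨i, hi, A, hAS, hA, ?_, fun j hj => ?_⟩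
  · calc d i = d i / R * R := hdiR.symm
      _ ≤ d i / R * μ i S := by gcongr; exact hval i hi
      _ = μ i A := by rw [hμA i hi, hPA]
  · calc R - d i = R - d i / R * R := by rw [hdiR]
      _ ≤ μ j S - μ j A := ENNReal.sub_mul_le_sub_of_le_mul hR (hfin j hj) (hval j hj)
          (by rw [hμA j hj]; gcongr; exact hPA_le j hj)
      _ = μ j (S \ A) := (measure_sdiff hAS hA.nullMeasurableSet
          (ne_top_of_le_ne_top (hfin j hj) (measure_mono hAS))).symm

theorem exists_partition_of_sum_le {ι : Type*} [Nonempty ι] {μ : ι → Measure ℝ}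
    (hac : ∀ i, μ i ≪ volume) (d : ι → ℝ≥0∞) (s : Finset ι) {S : Set ℝ}
    (hS : MeasurableSet S)
    (hfin : ∀ i ∈ s, μ i S ≠ ∞) (hval : ∀ i ∈ s, ∑ k ∈ s, d k ≤ μ i S) :
    ∃ X : ι → Set ℝ, (∀ i, MeasurableSet (X i)) ∧ Pairwise (Disjoint on X) ∧
      ⋃ i, X i = S ∧ ∀ i ∈ s, d i ≤ μ i (X i) := by
  classical
  induction s using Finset.strongInduction generalizing S with | H s ih =>
  rcases s.eq_empty_or_nonempty with rfl | hs
  · obtain ⟨i₀⟩ := ‹Nonempty ι›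
    have hdisj := pairwise_disjoint_update_union (Y := fun _ => (∅ : Set ℝ))
      (fun _ _ _ => disjoint_bot_left) (fun _ => disjoint_bot_right (a := S)) i₀
    have hunion := iUnion_update_union (fun _ => (∅ : Set ℝ)) S i₀
    simp only [empty_union, iUnion_empty] at hdisj hunion
    refine ⟨update (fun _ => ∅) i₀ S, fun i => ?_, hdisj, hunion, by simp⟩
    rcases eq_or_ne i i₀ with rfl | h <;> simp [*]
  obtain ⟨i, hi, A, hAS, hA, hdA, hrest⟩ := exists_piece_of_sum_le hac hs hS hfin hval
  have hdi : d i ≠ ∞ := ne_top_of_le_ne_top (hfin i hi) (hdA.trans (measure_mono hAS))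
  obtain ⟨Y, hYm, hYd, hYu, hYv⟩ := ih (s.erase i) (Finset.erase_ssubset hi) (hS.diff hA)
    (fun j hj => ne_top_of_le_ne_top (hfin j (Finset.mem_of_mem_erase hj))
      (measure_mono sdiff_subset))
    (fun j hj => (ENNReal.le_sub_of_add_le_right hdi (Finset.sum_erase_add s d hi).le).trans
      (hrest j (Finset.mem_of_mem_erase hj)))
  have hAY : ∀ j, Disjoint A (Y j) := fun j =>
    disjoint_sdiff_right.mono_right (hYu ▸ subset_iUnion Y j)
  refine ⟨update Y i (Y i ∪ A), fun j => ?_, pairwise_disjoint_update_union hYd hAY i, ?_,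
    fun j hj => ?_⟩
  · rcases eq_or_ne j i with rfl | h
    · simpa using (hYm j).union hA
    · simpa [h] using hYm j
  · rw [iUnion_update_union, hYu, sdiff_union_of_subset hAS]
  · rcases eq_or_ne j i with rfl | h
    · simpa using hdA.trans (measure_mono subset_union_right)
    · simpa [h] using hYv j (Finset.mem_erase.2 ⟨h, hj⟩)

end CakeCutting

theorem proportional_division_exists_interval_general
    (n : ℕ) (hn : 1 ≤ n) (D : ℝ)
    (μ : Fin n → Measure ℝ)
    (hac : ∀ i, μ i ≪ volume)
    (htot : ∀ i, μ i (Set.Icc 0 1) = ENNReal.ofReal D)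
    (d : Fin n → ℝ) (hd : ∀ i, 0 < d i) (hsum : ∑ i, d i = D) :
    ∃ X : Fin n → Set ℝ,
      (∀ i, MeasurableSet (X i)) ∧
      (∀ i j, i ≠ j → Disjoint (X i) (X j)) ∧
      (⋃ i, X i) = Set.Icc 0 1 ∧
      (∀ i, ENNReal.ofReal (d i) ≤ μ i (X i)) := by
  have : Nonempty (Fin n) := ⟨⟨0, hn⟩⟩
  have hval : ∀ i ∈ Finset.univ, ∑ k, ENNReal.ofReal (d k) ≤ μ i (Icc 0 1) := fun i _ => by
    rw [← ENNReal.ofReal_sum_of_nonneg fun k _ => (hd k).le, hsum, htot]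
  obtain ⟨X, hXm, hXd, hXu, hXv⟩ := CakeCutting.exists_partition_of_sum_le hac _ Finset.univ
    measurableSet_Icc (fun i _ => by simp [htot]) hval
  exact ⟨X, hXm, fun i j hij => hXd hij, hXu, fun i => hXv i (Finset.mem_univ i)⟩

/-- Proportional cake cutting with unequal shares on the interval `[0,1]`:
for players with absolutely continuous finite measures all assigning value `D`
to `[0,1]` and positive demands summing to `D`, there is a measurable partition
of `[0,1]` giving each player at least her demand. -/
theorem proportional_division_exists_interval
    (n : ℕ) (hn : 1 ≤ n) (D : ℝ) (hD : 0 < D)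
    (μ : Fin n → Measure ℝ) [∀ i, IsFiniteMeasure (μ i)]
    (hac : ∀ i, μ i ≪ volume)
    (htot : ∀ i, μ i (Set.Icc 0 1) = ENNReal.ofReal D)
    (d : Fin n → ℝ) (hd : ∀ i, 0 < d i) (hsum : ∑ i, d i = D) :
    ∃ X : Fin n → Set ℝ,
      (∀ i, MeasurableSet (X i)) ∧
      (∀ i j, i ≠ j → Disjoint (X i) (X j)) ∧
      (⋃ i, X i) = Set.Icc 0 1 ∧
      (∀ i, ENNReal.ofReal (d i) ≤ μ i (X i)) :=
  proportional_division_exists_interval_general n hn D μ hac htot d hd hsum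
end

section
/- Let k ≥ 1 and let X ⊆ ℝᵏ be a Lebesgue-measurable set with 0 < λ(X) < ∞, where λ denotes Lebesgue measure. Let n ≥ 1 and let μ₁, …, μₙ be finite measures on the measurable subsets of X, each absolutely continuous with respect to λ, with μᵢ(X) = D for every i, where D is a positive real number. Let d₁, …, dₙ be positive real numbers with d₁ + ⋯ + dₙ = D. Then there exists a measurable partition X₁, …, Xₙ of X (pairwise disjoint measurable pieces whose union is X) such that μᵢ(Xᵢ) ≥ dᵢ for every i. -/
/-!
A finite family of finite measures on `ℝᵏ`, all absolutely continuous with respect to Lebesgue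
measure, admits a common *uniform sweep* of any measurable set `A`: a monotone family `f t` of
subsets of `A`, running from `∅` at `t = 0` to `A` at `t = 1`, such that `μ (f t) = t * μ A` for
every measure of the family at once. Slicing the cake between the cumulative demand fractions
`(d₁ + ⋯ + dᵢ) / D` then gives every player exactly her demand.

Sweeps are built one measure at a time, all measures being dominated by a fixed finite anchor `ρ`
(the sum of the family). Given a sweep `f` for the measures treated so far, every window
`f (t + 1/2) \ f t` carries half of each of them, while its `ν`-mass is continuous in `t` because
`ν ≪ ρ`; since the windows at `t = 0` and `t = 1/2` are complementary, the intermediate value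
theorem yields a window carrying half of `ν` too. Halving every set in this way and iterating
along the dyadic rationals gives a sweep that also serves `ν`. The induction starts from the
anchor alone, which is halved by a hyperplane orthogonal to a coordinate axis.
-/

open MeasureTheory Set Filter Topology Function
open scoped symmDiff

namespace MeasureTheory.Measure.AbsolutelyContinuous

variable {Ω : Type*} [MeasurableSpace Ω] {ν ρ : Measure Ω}

theorem tendsto_measure_nhds_zero [IsFiniteMeasure ν] [SigmaFinite ρ] (hνρ : ν ≪ ρ)
    {ι : Type*} {l : Filter ι} {s : ι → Set Ω} (hs : Tendsto (fun i ↦ ρ (s i)) l (𝓝 0)) :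
    Tendsto (fun i ↦ ν (s i)) l (𝓝 0) := by
  simp_rw [← Measure.setLIntegral_rnDeriv hνρ]
  exact tendsto_setLIntegral_zero (Measure.lintegral_rnDeriv_le.trans_lt (measure_lt_top _ _)).ne hs

end MeasureTheory.Measure.AbsolutelyContinuous

namespace CakeCutting

section Dyadic

variable {α : Type*} (A : Set α) (half : Set α → Set α)

/-- The union of the first `j` of the `2 ^ k` cells obtained from `A` by `k` rounds of halving,
where `half B` is the half of `B` that comes first. -/
def dyadicUnion : ℕ → ℕ → Set α
  | 0, j => if j = 0 then ∅ else A
  | k + 1, j =>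
    if j % 2 = 0 then dyadicUnion k (j / 2)
    else dyadicUnion k (j / 2) ∪ half (dyadicUnion k (j / 2 + 1) \ dyadicUnion k (j / 2))

variable {A half}

theorem dyadicUnion_succ_two_mul (k j : ℕ) :
    dyadicUnion A half (k + 1) (2 * j) = dyadicUnion A half k j := by
  simp [dyadicUnion]

theorem dyadicUnion_succ_two_mul_add_one (k j : ℕ) :
    dyadicUnion A half (k + 1) (2 * j + 1) =
      dyadicUnion A half k j ∪ half (dyadicUnion A half k (j + 1) \ dyadicUnion A half k j) := by
  simp [dyadicUnion, Nat.add_mod, Nat.add_div]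

theorem dyadicUnion_div_two_subset (k j : ℕ) :
    dyadicUnion A half k (j / 2) ⊆ dyadicUnion A half (k + 1) j := by
  obtain ⟨a, rfl | rfl⟩ := Nat.even_or_odd' j
  · simp [dyadicUnion_succ_two_mul]
  · rw [dyadicUnion_succ_two_mul_add_one, show (2 * a + 1) / 2 = a by omega]
    exact subset_union_left

theorem dyadicUnion_zero_right (k : ℕ) : dyadicUnion A half k 0 = ∅ := by
  induction k with
  | zero => simp [dyadicUnion]
  | succ k ih => rw [← mul_zero 2, dyadicUnion_succ_two_mul, ih]

theorem dyadicUnion_two_pow (k : ℕ) : dyadicUnion A half k (2 ^ k) = A := by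
  induction k with
  | zero => simp [dyadicUnion]
  | succ k ih => rw [pow_succ', dyadicUnion_succ_two_mul, ih]

variable [MeasurableSpace α] (hA : MeasurableSet A) (hsub : ∀ B, MeasurableSet B → half B ⊆ B)
  (hmeas : ∀ B, MeasurableSet B → MeasurableSet (half B))
include hA hmeas

theorem measurableSet_dyadicUnion (k j : ℕ) : MeasurableSet (dyadicUnion A half k j) := by
  induction k generalizing j with
  | zero => unfold dyadicUnion; split_ifs <;> simp [hA]
  | succ k ih =>
    unfold dyadicUnion
    split_ifs
    exacts [ih _, (ih _).union (hmeas _ ((ih _).diff (ih _)))]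

include hsub

theorem monotone_dyadicUnion (k : ℕ) : Monotone (dyadicUnion A half k) := by
  refine monotone_nat_of_le_succ fun j ↦ ?_
  induction k generalizing j with
  | zero => simp only [dyadicUnion, Nat.add_one_ne_zero, if_false]; split_ifs <;> simp
  | succ k ih =>
    obtain ⟨a, rfl | rfl⟩ := Nat.even_or_odd' j
    · rw [dyadicUnion_succ_two_mul_add_one, dyadicUnion_succ_two_mul]
      exact subset_union_left
    · have hE := (measurableSet_dyadicUnion hA hmeas k (a + 1)).diff
        (measurableSet_dyadicUnion hA hmeas k a)
      rw [dyadicUnion_succ_two_mul_add_one, show 2 * a + 1 + 1 = 2 * (a + 1) by ring,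
        dyadicUnion_succ_two_mul]
      exact union_subset (ih a) ((hsub _ hE).trans sdiff_subset)

theorem measureReal_dyadicUnion {μ : Measure α} [IsFiniteMeasure μ]
    (hhalf : ∀ B, MeasurableSet B → μ.real (half B) = μ.real B / 2) (k j : ℕ)
    (hj : j ≤ 2 ^ k) : μ.real (dyadicUnion A half k j) = j / 2 ^ k * μ.real A := by
  induction k generalizing j with
  | zero => interval_cases j <;> simp [dyadicUnion]
  | succ k ih =>
    obtain ⟨a, rfl | rfl⟩ := Nat.even_or_odd' j
    · rw [dyadicUnion_succ_two_mul, ih a (by omega)]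
      push_cast
      field_simp
      ring
    · have hD := measurableSet_dyadicUnion hA hmeas k
      have hE := (hD (a + 1)).diff (hD a)
      have hdisj : Disjoint (dyadicUnion A half k a)
          (half (dyadicUnion A half k (a + 1) \ dyadicUnion A half k a)) :=
        disjoint_sdiff_right.mono_right (hsub _ hE)
      rw [dyadicUnion_succ_two_mul_add_one, measureReal_union hdisj (hmeas _ hE), hhalf _ hE,
        measureReal_sdiff (monotone_dyadicUnion hA hsub hmeas k a.le_succ) (hD a),
        ih a (by omega), ih (a + 1) (by rw [pow_succ] at hj; omega)]
      push_cast
      field_simp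
      ring

end Dyadic

variable {Ω : Type*} [MeasurableSpace Ω]

theorem measureReal_symmDiff_of_monotone {α : Type*} [LinearOrder α] {f : α → Set Ω}
    (hf : Monotone f) (hfm : ∀ t, MeasurableSet (f t)) (μ : Measure Ω) [IsFiniteMeasure μ]
    (a b : α) : μ.real (f a ∆ f b) = |μ.real (f a) - μ.real (f b)| := by
  rcases le_total a b with hab | hab
  · rw [symmDiff_of_le (hf hab), measureReal_sdiff (hf hab) (hfm a), abs_sub_comm,
      abs_of_nonneg (sub_nonneg.2 (measureReal_mono (hf hab)))]
  · rw [symmDiff_of_ge (hf hab), measureReal_sdiff (hf hab) (hfm b),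
      abs_of_nonneg (sub_nonneg.2 (measureReal_mono (hf hab)))]

theorem continuousOn_measureReal_of_absolutelyContinuous {α : Type*} [LinearOrder α]
    [TopologicalSpace α] {f : α → Set Ω} (hf : Monotone f) (hfm : ∀ t, MeasurableSet (f t))
    {ν ρ : Measure Ω} [IsFiniteMeasure ν] [IsFiniteMeasure ρ] (hνρ : ν ≪ ρ) {s : Set α}
    (hρ : ContinuousOn (fun t ↦ ρ.real (f t)) s) : ContinuousOn (fun t ↦ ν.real (f t)) s := by
  intro t₀ ht₀
  have hρ₀ : Tendsto (fun t ↦ ρ (f t ∆ f t₀)) (𝓝[s] t₀) (𝓝 0) := by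
    have h := ENNReal.tendsto_ofReal ((hρ t₀ ht₀).sub_const (ρ.real (f t₀))).abs
    rw [sub_self, abs_zero, ENNReal.ofReal_zero] at h
    refine h.congr fun t ↦ ?_
    rw [← measureReal_symmDiff_of_monotone hf hfm, ofReal_measureReal]
  have hν₀ : Tendsto (fun t ↦ ν.real (f t ∆ f t₀)) (𝓝[s] t₀) (𝓝 0) :=
    (ENNReal.tendsto_toReal ENNReal.zero_ne_top).comp (hνρ.tendsto_measure_nhds_zero hρ₀)
  rw [ContinuousWithinAt, tendsto_iff_dist_tendsto_zero]
  simpa [measureReal_symmDiff_of_monotone hf hfm, Real.dist_eq] using hν₀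

def HasHalving (M : Set (Measure Ω)) : Prop :=
  ∀ B, MeasurableSet B → ∃ S ⊆ B, MeasurableSet S ∧ ∀ μ ∈ M, μ.real S = μ.real B / 2

/-- Stated with `Measure.real`, hence meaningful for finite measures only. -/
structure IsUniformSweep (M : Set (Measure Ω)) (A : Set Ω) (f : ℝ → Set Ω) : Prop where
  monotone : Monotone f
  measurableSet : ∀ t, MeasurableSet (f t)
  zero : f 0 = ∅
  one : f 1 = A
  measureReal : ∀ μ ∈ M, ∀ t ∈ Icc (0 : ℝ) 1, μ.real (f t) = t * μ.real A

theorem hasHalving_singleton_of_measure_preimage_singleton {ρ : Measure Ω} [IsFiniteMeasure ρ]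
    {φ : Ω → ℝ} (hφ : Measurable φ) (hρφ : ∀ s, ρ (φ ⁻¹' {s}) = 0) : HasHalving {ρ} := by
  intro B hB
  simp only [mem_singleton_iff, forall_eq]
  rcases (measureReal_nonneg : 0 ≤ ρ.real B).eq_or_lt with hB0 | hB0
  · exact ⟨∅, empty_subset B, .empty, by simp [← hB0]⟩
  set F : ℝ → ℝ := fun s ↦ ρ.real (B ∩ φ ⁻¹' Iic s)
  have hmeas : ∀ s, MeasurableSet (B ∩ φ ⁻¹' Iic s) := fun s ↦ hB.inter (hφ measurableSet_Iic)
  have hlim : ∀ (l : Filter ℝ) [l.IsCountablyGenerated] (C : Set Ω), MeasurableSet C →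
      (∀ᵐ x ∂ρ, ∀ᶠ s in l, x ∈ B ∩ φ ⁻¹' Iic s ↔ x ∈ C) → Tendsto F l (𝓝 (ρ.real C)) :=
    fun l _ C hC h ↦ (ENNReal.tendsto_toReal (measure_ne_top ρ C)).comp
      (tendsto_measure_of_ae_tendsto_indicator_of_isFiniteMeasure l hC hmeas h)
  have hcont : Continuous F := continuous_iff_continuousAt.2 fun s₀ ↦ by
    refine hlim _ _ (hmeas s₀) ?_
    filter_upwards [measure_eq_zero_iff_ae_notMem.1 (hρφ s₀)] with x hx
    rcases lt_or_gt_of_ne (hx : φ x ≠ s₀) with h | h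
    · filter_upwards [lt_mem_nhds h] with s hs
      simp [h.le, hs.le]
    · filter_upwards [gt_mem_nhds h] with s hs
      simp [not_le.2 h, not_le.2 hs]
  have hbot : Tendsto F atBot (𝓝 0) := by
    simpa using hlim atBot ∅ .empty (ae_of_all _ fun x ↦ by
      filter_upwards [eventually_lt_atBot (φ x)] with s hs
      simp [not_le.2 hs])
  have htop : Tendsto F atTop (𝓝 (ρ.real B)) :=
    hlim atTop B hB (ae_of_all _ fun x ↦ by
      filter_upwards [eventually_ge_atTop (φ x)] with s hs
      simp [hs])
  obtain ⟨s, hs⟩ := mem_range_of_exists_le_of_exists_ge hcont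
    (hbot.eventually (eventually_le_nhds (half_pos hB0))).exists
    (htop.eventually (eventually_ge_nhds (half_lt_self hB0))).exists
  exact ⟨B ∩ φ ⁻¹' Iic s, inter_subset_left, hmeas s, hs⟩

section Sweep

variable {M : Set (Measure Ω)} {A : Set Ω} {f : ℝ → Set Ω}

theorem IsUniformSweep.subset (hf : IsUniformSweep M A f) {t : ℝ} (ht : t ≤ 1) : f t ⊆ A :=
  hf.one ▸ hf.monotone ht

theorem HasHalving.exists_isUniformSweep (hM : HasHalving M) (hfin : ∀ μ ∈ M, IsFiniteMeasure μ)
    (hA : MeasurableSet A) : ∃ f, IsUniformSweep M A f := by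
  choose! half hsub hmeas hval using hM
  set D := dyadicUnion A half
  have hDmono := monotone_dyadicUnion hA hsub hmeas
  have hfloor_pow (k : ℕ) : ⌊(2 : ℝ) ^ k⌋₊ = 2 ^ k := by exact_mod_cast Nat.floor_natCast (2 ^ k)
  have hD_mono_level (t : ℝ) : Monotone fun k ↦ D k ⌊t * 2 ^ k⌋₊ :=
    monotone_nat_of_le_succ fun k ↦ by
      have h : ⌊t * 2 ^ (k + 1)⌋₊ / 2 = ⌊t * 2 ^ k⌋₊ := by
        rw [pow_succ, ← mul_assoc]
        exact_mod_cast Nat.mul_cast_floor_div_cancel two_ne_zero (t * 2 ^ k)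
      simpa only [h] using dyadicUnion_div_two_subset k ⌊t * 2 ^ (k + 1)⌋₊
  refine ⟨fun t ↦ ⋃ k, D k ⌊t * 2 ^ k⌋₊, ⟨fun s t hst ↦ ?_,
    fun t ↦ .iUnion fun k ↦ measurableSet_dyadicUnion hA hmeas _ _,
    by simp [D, dyadicUnion_zero_right], by simp [D, dyadicUnion_two_pow, hfloor_pow, iUnion_const],
    fun μ hμ t ht ↦ ?_⟩⟩
  · exact iUnion_mono fun k ↦ hDmono k (Nat.floor_le_floor (by gcongr))
  · have := hfin μ hμ
    have hval_level (k : ℕ) :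
        μ.real (D k ⌊t * 2 ^ k⌋₊) = ⌊t * 2 ^ k⌋₊ / 2 ^ k * μ.real A :=
      measureReal_dyadicUnion hA hsub hmeas (hval · · μ hμ) k _ <| Nat.floor_le_of_le <| by
        push_cast
        exact mul_le_of_le_one_left (by positivity) ht.2
    refine tendsto_nhds_unique ((ENNReal.tendsto_toReal (measure_ne_top μ _)).comp
      (tendsto_measure_iUnion_atTop (hD_mono_level t))) ?_
    simp_rw [comp_def, ← measureReal_def, hval_level]
    exact ((tendsto_nat_floor_mul_div_atTop ht.1).comp
      (tendsto_pow_atTop_atTop_of_one_lt one_lt_two)).mul_const _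

theorem IsUniformSweep.exists_half_insert (hf : IsUniformSweep M A f)
    (hfin : ∀ μ ∈ M, IsFiniteMeasure μ) {ρ ν : Measure Ω} [IsFiniteMeasure ρ] [IsFiniteMeasure ν]
    (hρ : ρ ∈ M) (hνρ : ν ≪ ρ) :
    ∃ S ⊆ A, MeasurableSet S ∧ ∀ μ ∈ insert ν M, μ.real S = μ.real A / 2 := by
  have hcont : ContinuousOn (fun t ↦ ν.real (f t)) (Icc 0 1) :=
    continuousOn_measureReal_of_absolutelyContinuous hf.monotone hf.measurableSet hνρ
      ((continuous_id.mul continuous_const).continuousOn.congr (hf.measureReal ρ hρ))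
  set φ : ℝ → ℝ := fun t ↦ ν.real (f (t + 1 / 2)) - ν.real (f t)
  have hφ : ContinuousOn φ (Icc 0 (1 / 2)) :=
    (hcont.comp (continuous_add_const _).continuousOn fun t ht ↦
      ⟨by linarith [ht.1], by linarith [ht.2]⟩).sub
      (hcont.mono (Icc_subset_Icc_right (by norm_num)))
  have hφ_ends : φ 0 + φ (1 / 2) = ν.real A := by
    simp only [φ, hf.zero, measureReal_empty]
    norm_num [hf.one]
  obtain ⟨t, ht, hφt⟩ : ∃ t ∈ Icc (0 : ℝ) (1 / 2), φ t = ν.real A / 2 := by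
    refine hφ.surjOn_uIcc (left_mem_Icc.2 (by norm_num)) (right_mem_Icc.2 (by norm_num)) ?_
    rcases le_total (φ 0) (φ (1 / 2)) with h | h
    · exact mem_uIcc.2 (Or.inl ⟨by linarith, by linarith⟩)
    · exact mem_uIcc.2 (Or.inr ⟨by linarith, by linarith⟩)
  have hsub : f t ⊆ f (t + 1 / 2) := hf.monotone (by linarith)
  refine ⟨f (t + 1 / 2) \ f t, sdiff_subset.trans (hf.subset (by linarith [ht.2])),
    (hf.measurableSet _).diff (hf.measurableSet _), ?_⟩
  rintro μ (rfl | hμ)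
  · rwa [measureReal_sdiff hsub (hf.measurableSet t)]
  · have := hfin μ hμ
    rw [measureReal_sdiff hsub (hf.measurableSet t),
      hf.measureReal μ hμ _ ⟨by linarith [ht.1], by linarith [ht.2]⟩,
      hf.measureReal μ hμ _ ⟨ht.1, by linarith [ht.2]⟩]
    ring

theorem iUnion_fin_sdiff_of_monotone {α : Type*} {g : ℕ → Set α} (hg : Monotone g) (n : ℕ) :
    ⋃ i : Fin n, (g (i + 1) \ g i) = g n \ g 0 := by
  induction n with
  | zero => simp
  | succ n ih =>
    rw [iUnion_fin_add_one_eq_iUnion_castSucc]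
    simp only [comp_def, Fin.val_castSucc, Fin.val_last, ih]
    rw [union_comm]
    exact sdiff_union_sdiff_cancel (hg n.le_succ) (hg n.zero_le)

theorem IsUniformSweep.exists_partition (hf : IsUniformSweep M A f)
    (hfin : ∀ μ ∈ M, IsFiniteMeasure μ) {n : ℕ} (w : Fin n → ℝ) (hw : ∀ i, 0 ≤ w i)
    (hsum : ∑ i, w i = 1) :
    ∃ P : Fin n → Set Ω, (∀ i, MeasurableSet (P i)) ∧ (∀ i, P i ⊆ A) ∧
      Pairwise (Disjoint on P) ∧ ⋃ i, P i = A ∧ ∀ μ ∈ M, ∀ i, μ.real (P i) = w i * μ.real A := by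
  set w' : ℕ → ℝ := fun j ↦ if h : j < n then w ⟨j, h⟩ else 0
  set c : ℕ → ℝ := fun m ↦ ∑ j ∈ Finset.range m, w' j
  have hc_mono : Monotone c := fun a b hab ↦
    Finset.sum_le_sum_of_subset_of_nonneg (Finset.range_subset_range.2 hab) fun j _ _ ↦ by
      simp only [w']
      split_ifs <;> simp [hw]
  have hc_n : c n = 1 := by
    rw [← hsum, show c n = ∑ j ∈ Finset.range n, w' j from rfl, ← Fin.sum_univ_eq_sum_range]
    simp [w']
  have hc_succ (i : Fin n) : c (i + 1) = c i + w i := by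
    simp [c, Finset.sum_range_succ, w']
  have hc_mem (m : ℕ) (hm : m ≤ n) : c m ∈ Icc (0 : ℝ) 1 :=
    ⟨by simpa [c] using hc_mono m.zero_le, hc_n ▸ hc_mono hm⟩
  set g : ℕ → Set Ω := fun m ↦ f (c m)
  have hg : Monotone g := hf.monotone.comp hc_mono
  refine ⟨fun i ↦ g (i + 1) \ g i, fun i ↦ (hf.measurableSet _).diff (hf.measurableSet _),
    fun i ↦ sdiff_subset.trans (hf.subset (hc_mem _ i.isLt).2), ?_, ?_, fun μ hμ i ↦ ?_⟩
  · refine (pairwise_disjoint_on _).2 fun i j hij ↦ ?_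
    exact disjoint_sdiff_right.mono_left (sdiff_subset.trans (hg (Nat.succ_le_of_lt hij)))
  · rw [iUnion_fin_sdiff_of_monotone hg n]
    simp [g, c, hf.zero, hc_n ▸ hf.one]
  · have := hfin μ hμ
    rw [measureReal_sdiff (hg (Nat.le_succ i)) (hf.measurableSet _),
      hf.measureReal μ hμ _ (hc_mem _ i.isLt), hf.measureReal μ hμ _ (hc_mem _ i.isLt.le),
      hc_succ]
    ring

end Sweep

theorem exists_isUniformSweep_insert {ρ : Measure Ω} [IsFiniteMeasure ρ] (hρ : HasHalving {ρ})
    {M : Set (Measure Ω)} (hM : M.Finite) (hfin : ∀ μ ∈ M, IsFiniteMeasure μ)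
    (hac : ∀ μ ∈ M, μ ≪ ρ) {A : Set Ω} (hA : MeasurableSet A) :
    ∃ f, IsUniformSweep (insert ρ M) A f := by
  induction M, hM using Set.Finite.induction_on generalizing A with
  | empty => simpa using hρ.exists_isUniformSweep (by simpa) hA
  | @insert ν M _ _ ih =>
    simp only [mem_insert_iff, forall_eq_or_imp] at hfin hac
    have := hfin.1
    have hfinρ : ∀ μ ∈ insert ρ M, IsFiniteMeasure μ := by
      simpa only [mem_insert_iff, forall_eq_or_imp] using ⟨inferInstance, hfin.2⟩
    rw [insert_comm]
    refine HasHalving.exists_isUniformSweep (fun B hB ↦ ?_) ?_ hA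
    · obtain ⟨f, hf⟩ := ih hfin.2 hac.2 hB
      exact hf.exists_half_insert hfinρ (mem_insert ρ M) hac.1
    · simpa only [mem_insert_iff, forall_eq_or_imp] using ⟨hfin.1, inferInstance, hfin.2⟩

theorem exists_isUniformSweep_of_absolutelyContinuous_volume {ι κ : Type*} [Fintype ι]
    [Fintype κ] [Nonempty κ] (μ : ι → Measure (κ → ℝ)) [∀ i, IsFiniteMeasure (μ i)]
    (hac : ∀ i, μ i ≪ volume) {A : Set (κ → ℝ)} (hA : MeasurableSet A) :
    ∃ f, IsUniformSweep (range μ) A f := by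
  obtain ⟨z⟩ := ‹Nonempty κ›
  have : IsFiniteMeasure (Measure.sum μ) := by rw [Measure.sum_fintype]; infer_instance
  have hρ : HasHalving {Measure.sum μ} :=
    hasHalving_singleton_of_measure_preimage_singleton (measurable_pi_apply z) fun s ↦
      Measure.absolutelyContinuous_sum_left hac <| by
        rw [volume_pi]
        exact Measure.pi_hyperplane (fun _ : κ ↦ (volume : Measure ℝ)) z s
  obtain ⟨f, hf⟩ := exists_isUniformSweep_insert hρ (finite_range μ)
    (by rintro _ ⟨i, rfl⟩; infer_instance)
    (by rintro _ ⟨i, rfl⟩; exact Measure.absolutelyContinuous_of_le (Measure.le_sum μ i)) hA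
  exact ⟨f, { hf with measureReal := fun ν hν ↦ hf.measureReal ν (mem_insert_of_mem _ hν) }⟩

end CakeCutting

theorem proportional_division_exists_general_general
    (k : ℕ) (hk : 1 ≤ k) (X : Set (Fin k → ℝ))
    (hXm : MeasurableSet X)
    (n : ℕ) (D : ℝ) (hD : 0 < D)
    (μ : Fin n → Measure (Fin k → ℝ)) [∀ i, IsFiniteMeasure (μ i)]
    (hac : ∀ i, μ i ≪ volume)
    (htot : ∀ i, μ i X = ENNReal.ofReal D)
    (d : Fin n → ℝ) (hd : ∀ i, 0 < d i) (hsum : ∑ i, d i = D) :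
    ∃ P : Fin n → Set (Fin k → ℝ),
      (∀ i, MeasurableSet (P i)) ∧
      (∀ i, P i ⊆ X) ∧
      (∀ i j, i ≠ j → Disjoint (P i) (P j)) ∧
      (⋃ i, P i) = X ∧
      (∀ i, ENNReal.ofReal (d i) ≤ μ i (P i)) := by
  have : Nonempty (Fin k) := ⟨⟨0, hk⟩⟩
  obtain ⟨f, hf⟩ := CakeCutting.exists_isUniformSweep_of_absolutelyContinuous_volume μ hac hXm
  obtain ⟨P, hPm, hPX, hPdisj, hPcover, hPμ⟩ := hf.exists_partition
    (by rintro _ ⟨i, rfl⟩; infer_instance) (fun i ↦ d i / D) (fun i ↦ (div_pos (hd i) hD).le)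
    (by rw [← Finset.sum_div, hsum, div_self hD.ne'])
  refine ⟨P, hPm, hPX, fun i j hij ↦ hPdisj hij, hPcover, fun i ↦ le_of_eq ?_⟩
  rw [← ofReal_measureReal, hPμ (μ i) ⟨i, rfl⟩, measureReal_def, htot,
    ENNReal.toReal_ofReal hD.le, div_mul_cancel₀ _ hD.ne']

/-- Proportional cake cutting with unequal shares on a generalized cake:
a Lebesgue-measurable set `X ⊆ ℝᵏ` of finite positive volume can be partitioned
into measurable pieces so that each player, whose absolutely continuous finite
measure assigns value `D` to `X`, receives at least her demand. -/
theorem proportional_division_exists_general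
    (k : ℕ) (hk : 1 ≤ k) (X : Set (Fin k → ℝ))
    (hXm : MeasurableSet X) (hX0 : 0 < volume X) (hXfin : volume X < ⊤)
    (n : ℕ) (hn : 1 ≤ n) (D : ℝ) (hD : 0 < D)
    (μ : Fin n → Measure (Fin k → ℝ)) [∀ i, IsFiniteMeasure (μ i)]
    (hac : ∀ i, μ i ≪ volume)
    (htot : ∀ i, μ i X = ENNReal.ofReal D)
    (d : Fin n → ℝ) (hd : ∀ i, 0 < d i) (hsum : ∑ i, d i = D) :
    ∃ P : Fin n → Set (Fin k → ℝ),
      (∀ i, MeasurableSet (P i)) ∧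
      (∀ i, P i ⊆ X) ∧
      (∀ i j, i ≠ j → Disjoint (P i) (P j)) ∧
      (⋃ i, P i) = X ∧
      (∀ i, ENNReal.ofReal (d i) ≤ μ i (P i)) :=
  proportional_division_exists_general_general k hk X hXm n D hD μ hac htot d hd hsum
end

section
/- Let T : ℕ → ℕ → ℕ be a function satisfying: (i) T(1, D) = 0 for all D ≥ 1; (ii) T(n, 1) = 0 for all n ≥ 1; (iii) T(2, D) ≤ 2·⌈log₂ D⌉ for all D ≥ 2; and (iv) for all n ≥ 3 and D ≥ 2, T(n, D) ≤ n + max_{1 ≤ i ≤ n} ( T(i, ⌊D/2⌋) + T(n−i+1, ⌈D/2⌉) ). Then for all n ≥ 2 and all D ≥ 1, T(n, D) ≤ 2(n−1)·⌈log₂ D⌉, where ⌈log₂ m⌉ denotes Nat.clog 2 m. -/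
/-- Any query-count function `T` satisfying the recursion of the protocol
"Proportional division with unequal shares" obeys
`T(n, D) ≤ 2(n-1)·⌈log₂ D⌉` for all `n ≥ 2`, `D ≥ 1`. -/
theorem protocol_query_bound
    (T : ℕ → ℕ → ℕ)
    (h1 : ∀ D, 1 ≤ D → T 1 D = 0)
    (h2 : ∀ n, 1 ≤ n → T n 1 = 0)
    (h3 : ∀ D, 2 ≤ D → T 2 D ≤ 2 * Nat.clog 2 D)
    (h4 : ∀ n D, 3 ≤ n → 2 ≤ D →
      T n D ≤ n + (Finset.Icc 1 n).sup
        (fun i => T i (D / 2) + T (n - i + 1) ((D + 1) / 2))) :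
    ∀ n D, 2 ≤ n → 1 ≤ D → T n D ≤ 2 * (n - 1) * Nat.clog 2 D := by
  have key : ∀ D n, 1 ≤ n → 1 ≤ D → T n D ≤ 2 * (n - 1) * Nat.clog 2 D := by
    intro D
    induction D using Nat.strong_induction_on with
    | _ D ih =>
      intro n hn hD
      rcases Nat.lt_or_ge D 2 with hD2 | hD2
      · have hD1 : D = 1 := by omega
        subst hD1
        simp [h2 n hn]
      rcases Nat.lt_or_ge n 3 with hn3 | hn3
      · interval_cases n
        · simp [h1 D hD]
        · have := h3 D hD2
          calc T 2 D ≤ 2 * Nat.clog 2 D := this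
            _ = 2 * (2 - 1) * Nat.clog 2 D := by norm_num
      · -- n ≥ 3, D ≥ 2
        set L := Nat.clog 2 D with hLdef
        have hL : 1 ≤ L := Nat.clog_pos (by norm_num) hD2
        have hrec : L = Nat.clog 2 ((D + 1) / 2) + 1 := by
          have h := Nat.clog_of_two_le (by norm_num : 1 < 2) hD2
          have e : D + 2 - 1 = D + 1 := by omega
          rw [e] at h
          rw [hLdef, h]
        have hhalf : Nat.clog 2 ((D + 1) / 2) = L - 1 := by omega
        have hmono : Nat.clog 2 (D / 2) ≤ L - 1 := by
          rw [← hhalf]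
          exact Nat.clog_mono_right 2 (by omega)
        -- bound each summand
        have hbound1 : ∀ i, 1 ≤ i → T i (D / 2) ≤ 2 * (i - 1) * (L - 1) := by
          intro i hi
          rcases Nat.eq_or_lt_of_le hi with rfl | hi2
          · simp [h1 (D / 2) (by omega)]
          rcases Nat.lt_or_ge (D / 2) 2 with hd | hd
          · have : D / 2 = 1 := by omega
            rw [this, h2 i (by omega)]
            exact Nat.zero_le _
          · have := ih (D / 2) (by omega) i (by omega) (by omega)
            calc T i (D / 2) ≤ 2 * (i - 1) * Nat.clog 2 (D / 2) := this
              _ ≤ 2 * (i - 1) * (L - 1) := Nat.mul_le_mul_left _ hmono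
        have hbound2 : ∀ m, 1 ≤ m → T m ((D + 1) / 2) ≤ 2 * (m - 1) * (L - 1) := by
          intro m hm
          rcases Nat.eq_or_lt_of_le hm with rfl | hm2
          · simp [h1 ((D + 1) / 2) (by omega)]
          rcases Nat.lt_or_ge ((D + 1) / 2) 2 with hd | hd
          · have : (D + 1) / 2 = 1 := by omega
            rw [this, h2 m (by omega)]
            exact Nat.zero_le _
          · have := ih ((D + 1) / 2) (by omega) m (by omega) (by omega)
            rw [hhalf] at this
            exact this
        have hsup : (Finset.Icc 1 n).sup
            (fun i => T i (D / 2) + T (n - i + 1) ((D + 1) / 2))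
            ≤ 2 * (n - 1) * (L - 1) := by
          apply Finset.sup_le
          intro i hi
          rw [Finset.mem_Icc] at hi
          have e1 := hbound1 i hi.1
          have e2 := hbound2 (n - i + 1) (by omega)
          have hsum : (i - 1) + (n - i + 1 - 1) = n - 1 := by omega
          calc T i (D / 2) + T (n - i + 1) ((D + 1) / 2)
              ≤ 2 * (i - 1) * (L - 1) + 2 * (n - i + 1 - 1) * (L - 1) :=
                Nat.add_le_add e1 e2
            _ = 2 * ((i - 1) + (n - i + 1 - 1)) * (L - 1) := by ring
            _ = 2 * (n - 1) * (L - 1) := by rw [hsum]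
        have := h4 n D hn3 hD2
        have hfin : n + 2 * (n - 1) * (L - 1) ≤ 2 * (n - 1) * L := by
          have h5 : 2 * (n - 1) * L = 2 * (n - 1) * (L - 1) + 2 * (n - 1) := by
            conv_lhs => rw [show L = (L - 1) + 1 from by omega]
            rw [Nat.mul_succ]
          omega
        calc T n D ≤ n + (Finset.Icc 1 n).sup
              (fun i => T i (D / 2) + T (n - i + 1) ((D + 1) / 2)) := this
          _ ≤ n + 2 * (n - 1) * (L - 1) := Nat.add_le_add_left hsup n
          _ ≤ 2 * (n - 1) * L := hfin
  intro n D hn hD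
  exact key D n (by omega) hD
end

section
/- Let m be a positive natural number, let D and B be positive real numbers, and let q₁, …, q_m be natural numbers such that Σ_{i=1}^{m} D / 3^{qᵢ} ≤ B. Then Σ_{i=1}^{m} qᵢ ≥ m · log₃( m·D / B ), where log₃ denotes the base-3 real logarithm (Real.logb 3). -/
/-- Arithmetic core of the lower-bound proof: if `∑ D/3^{qᵢ} ≤ B` for `m`
players, then `∑ qᵢ ≥ m·log₃(mD/B)`. -/
theorem lower_bound_amgm
    (m : ℕ) (hm : 0 < m) (D B : ℝ) (hD : 0 < D) (hB : 0 < B)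
    (q : Fin m → ℕ) (h : ∑ i, D / 3 ^ (q i) ≤ B) :
    (m : ℝ) * Real.logb 3 ((m : ℝ) * D / B) ≤ ∑ i, (q i : ℝ) := by
  have hm' : (0:ℝ) < m := by exact_mod_cast hm
  set s : ℝ := ∑ i, (q i : ℝ) with hs
  have h3 : (1:ℝ) < 3 := by norm_num
  -- AM-GM
  have amgm := Real.geom_mean_le_arith_mean_weighted Finset.univ
      (fun _ : Fin m => (m:ℝ)⁻¹) (fun i => (3:ℝ) ^ (-(q i : ℝ)))
      (fun i _ => by positivity)
      (by simp [Finset.sum_const, mul_inv_cancel₀ hm'.ne'])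
      (fun i _ => by positivity)
  have hprod : ∏ i : Fin m, ((3:ℝ) ^ (-(q i : ℝ))) ^ ((m:ℝ)⁻¹)
      = (3:ℝ) ^ (-(s / m)) := by
    have : ∀ i : Fin m, ((3:ℝ) ^ (-(q i : ℝ))) ^ ((m:ℝ)⁻¹)
        = Real.exp ((-(q i : ℝ) * (m:ℝ)⁻¹) * Real.log 3) := by
      intro i
      rw [← Real.rpow_mul (by norm_num), Real.rpow_def_of_pos (by norm_num)]
      ring_nf
    simp_rw [this, ← Real.exp_sum]
    rw [Real.rpow_def_of_pos (by norm_num)]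
    congr 1
    simp only [neg_mul]
    rw [Finset.sum_neg_distrib, ← Finset.sum_mul, ← Finset.sum_mul, ← hs]
    ring
  rw [hprod] at amgm
  have hsum : ∑ i : Fin m, (m:ℝ)⁻¹ * (3:ℝ) ^ (-(q i : ℝ))
      = (m:ℝ)⁻¹ * ∑ i : Fin m, (3:ℝ) ^ (-(q i : ℝ)) := by
    rw [Finset.mul_sum]
  rw [hsum] at amgm
  -- relate sum to h
  have hsum2 : ∑ i : Fin m, (3:ℝ) ^ (-(q i : ℝ)) ≤ B / D := by
    rw [le_div_iff₀ hD]
    calc (∑ i : Fin m, (3:ℝ) ^ (-(q i : ℝ))) * D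
        = ∑ i : Fin m, D / 3 ^ (q i) := by
          rw [Finset.sum_mul]
          refine Finset.sum_congr rfl fun i _ => ?_
          rw [Real.rpow_neg (by norm_num), Real.rpow_natCast]
          field_simp
      _ ≤ B := h
  have key : (m:ℝ) * D / B ≤ (3:ℝ) ^ (s / m) := by
    have h1 : (3:ℝ) ^ (-(s / m)) ≤ (m:ℝ)⁻¹ * (B / D) := by
      refine amgm.trans ?_
      exact mul_le_mul_of_nonneg_left hsum2 (by positivity)
    have h2 : (0:ℝ) < (3:ℝ) ^ (s / m) := by positivity
    rw [Real.rpow_neg (by norm_num)] at h1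
    rw [div_le_iff₀ hB]
    have := mul_le_mul_of_nonneg_left h1 (by positivity :
      (0:ℝ) ≤ (m:ℝ) * D * (3:ℝ) ^ (s / m))
    calc (m:ℝ) * D = (m:ℝ) * D * (3:ℝ) ^ (s/m) * ((3:ℝ) ^ (s/m))⁻¹ := by
          field_simp
      _ ≤ (m:ℝ) * D * (3:ℝ) ^ (s/m) * ((m:ℝ)⁻¹ * (B / D)) := this
      _ = (3:ℝ) ^ (s/m) * B := by field_simp
  have hlog : Real.logb 3 ((m:ℝ) * D / B) ≤ s / m := by
    have := Real.logb_le_logb_of_le h3 (by positivity) key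
    rwa [Real.logb_rpow (by norm_num) (by norm_num)] at this
  calc (m:ℝ) * Real.logb 3 ((m:ℝ) * D / B) ≤ (m:ℝ) * (s / m) :=
        mul_le_mul_of_nonneg_left hlog hm'.le
    _ = s := by field_simp
end

section
/- Let c₁ and c₂ be real numbers with 0 < c₁ < 1 and 0 < c₂ < 1, let n be a positive natural number such that m := c₁·n is a positive integer, and let D be a positive real number. If q₁, …, q_m are natural numbers satisfying Σ_{i=1}^{m} D / 3^{qᵢ} ≤ c₂·n, then Σ_{i=1}^{m} qᵢ ≥ c₁·n·( log₃ D + log₃(c₁/c₂) ), where log₃ denotes the base-3 real logarithm (Real.logb 3). -/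
/-!
Taking logarithms, `log (D / 3 ^ qᵢ) = log D - qᵢ log 3`, and by concavity of `log` the
average of these is at most the log of the average volume, which is at most
`c₂ n / m = c₂ / c₁`. Solving for `∑ qᵢ` gives the bound.
-/

open Finset Real

lemma sum_log_le_card_mul_log_div_card {ι : Type*} (s : Finset ι) (p : ι → ℝ)
    (hp : ∀ i ∈ s, 0 < p i) :
    ∑ i ∈ s, log (p i) ≤ #s * log ((∑ i ∈ s, p i) / #s) := by
  rcases s.eq_empty_or_nonempty with rfl | hs
  · simp
  have hcard : (0 : ℝ) < #s := by exact_mod_cast hs.card_pos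
  have jensen := strictConcaveOn_log_Ioi.concaveOn.le_map_sum (t := s)
    (w := fun _ => (#s : ℝ)⁻¹) (p := p) (fun _ _ => by positivity)
    (by rw [sum_const, nsmul_eq_mul, mul_inv_cancel₀ hcard.ne']) hp
  simp only [smul_eq_mul, ← mul_sum] at jensen
  rwa [inv_mul_le_iff₀ hcard, inv_mul_eq_div] at jensen

theorem card_mul_sub_logb_le_sum_of_sum_div_pow_le {ι : Type*} (s : Finset ι) {b D V : ℝ}
    (hb : 1 < b) (hD : 0 < D) (q : ι → ℕ) (h : ∑ i ∈ s, D / b ^ q i ≤ V) :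
    #s * (logb b D - logb b (V / #s)) ≤ ∑ i ∈ s, (q i : ℝ) := by
  rcases s.eq_empty_or_nonempty with rfl | hs
  · simp
  have hcard : (0 : ℝ) < #s := by exact_mod_cast hs.card_pos
  have hlogb : 0 < log b := log_pos hb
  have hterm : ∀ i ∈ s, 0 < D / b ^ q i := fun i _ => by positivity
  have hS : 0 < ∑ i ∈ s, D / b ^ q i := sum_pos hterm hs
  have hlog_term : ∀ i ∈ s, log (D / b ^ q i) = log D - q i * log b := fun i _ => by
    rw [log_div hD.ne' (by positivity), log_pow]
  have key : #s * log D - (∑ i ∈ s, (q i : ℝ)) * log b ≤ #s * log (V / #s) :=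
    calc #s * log D - (∑ i ∈ s, (q i : ℝ)) * log b = ∑ i ∈ s, log (D / b ^ q i) := by
          rw [sum_congr rfl hlog_term, sum_sub_distrib, sum_const, nsmul_eq_mul, sum_mul]
      _ ≤ #s * log ((∑ i ∈ s, D / b ^ q i) / #s) := sum_log_le_card_mul_log_div_card s _ hterm
      _ ≤ #s * log (V / #s) := by gcongr
  rw [logb, logb, ← sub_div, mul_div_assoc', div_le_iff₀ hlogb]
  linarith

theorem lower_bound_humble_players_general
    (c₁ c₂ : ℝ)
    (n : ℕ) (hn : 0 < n) (m : ℕ) (hmn : (m : ℝ) = c₁ * n)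
    (D : ℝ) (hD : 0 < D) (q : Fin m → ℕ)
    (h : ∑ i, D / 3 ^ (q i) ≤ c₂ * n) :
    c₁ * n * (Real.logb 3 D + Real.logb 3 (c₁ / c₂)) ≤ ∑ i, (q i : ℝ) := by
  have bound := card_mul_sub_logb_le_sum_of_sum_div_pow_le univ (by norm_num) hD q h
  have hn' : (n : ℝ) ≠ 0 := by positivity
  rwa [card_univ, Fintype.card_fin, hmn, mul_div_mul_right _ _ hn', ← inv_div, logb_inv,
    sub_neg_eq_add] at bound

/-- The lower bound for the `n`-player instance with `c₁n` humble players whose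
pieces have total volume at most `c₂n`: the total number of queries is at least
`c₁n(log₃ D + log₃(c₁/c₂))`. -/
theorem lower_bound_humble_players
    (c₁ c₂ : ℝ) (hc₁ : 0 < c₁) (hc₁' : c₁ < 1) (hc₂ : 0 < c₂) (hc₂' : c₂ < 1)
    (n : ℕ) (hn : 0 < n) (m : ℕ) (hm : 0 < m) (hmn : (m : ℝ) = c₁ * n)
    (D : ℝ) (hD : 0 < D) (q : Fin m → ℕ)
    (h : ∑ i, D / 3 ^ (q i) ≤ c₂ * n) :
    c₁ * n * (Real.logb 3 D + Real.logb 3 (c₁ / c₂)) ≤ ∑ i, (q i : ℝ) :=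
  lower_bound_humble_players_general c₁ c₂ n hn m hmn D hD q h
end

section
/- Let n ≥ 2, let μ₁, …, μₙ be finite measures on [0,1] with μᵢ([0,1]) = D for all i, let d₁, …, dₙ be positive reals with d₁ + ⋯ + dₙ = D, let j ∈ {2, …, n}, and let ε > 0. Let A ⊆ [0,1] be a measurable piece with μ₁(A) = d₁ and μⱼ(A) = d₁ + ε (with d₁ + ε < D). Suppose Y₁, …, Yₙ are pairwise disjoint measurable subsets of A, Z₁, …, Zₙ are pairwise disjoint measurable subsets of [0,1] ∖ A, and the following hold: μⱼ(Yⱼ) ≥ (dⱼ + d₁)·μⱼ(A)/D; μᵢ(Yᵢ) ≥ dᵢ·μᵢ(A)/D for all i ∉ {1, j}; μ₁(Z₁) ≥ ( d₁ + d₁²/(D − d₁) )·μ₁([0,1]∖A)/D; μⱼ(Zⱼ) ≥ ( dⱼ − d₁(d₁+ε)/(D − (d₁+ε)) )·μⱼ([0,1]∖A)/D; and μᵢ(Zᵢ) ≥ dᵢ·μᵢ([0,1]∖A)/D for all i ∉ {1, j}. Then for every i ∈ {1, …, n}, μᵢ(Yᵢ ∪ Zᵢ) ≥ dᵢ. -/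
open MeasureTheory

/-- Lemma 7.2: if each player receives her demanded share in the two
subinstances `I₂ₐ` (on the cake `A`) and `I₂ᵦ` (on the cake `[0,1] ∖ A`), then
the union of the received pieces is a proportional division of the original
instance. The `n + 2` players are indexed by `Fin (n + 2)`, player `P₁` being
index `0`. -/
theorem irrational_demands_case_two
    (n : ℕ) (D : ℝ) (μ : Fin (n + 2) → Measure ℝ)
    [∀ i, IsFiniteMeasure (μ i)]
    (htot : ∀ i, (μ i (Set.Icc 0 1)).toReal = D)
    (d : Fin (n + 2) → ℝ) (hd : ∀ i, 0 < d i) (hsum : ∑ i, d i = D)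
    (j : Fin (n + 2)) (hj : j ≠ 0) (ε : ℝ) (hε : 0 < ε)
    (A : Set ℝ) (hAm : MeasurableSet A) (hAsub : A ⊆ Set.Icc 0 1)
    (hA0 : (μ 0 A).toReal = d 0) (hAj : (μ j A).toReal = d 0 + ε)
    (hlt : d 0 + ε < D)
    (Y Z : Fin (n + 2) → Set ℝ)
    (hYm : ∀ i, MeasurableSet (Y i)) (hYsub : ∀ i, Y i ⊆ A)
    (hYdisj : ∀ i i', i ≠ i' → Disjoint (Y i) (Y i'))
    (hZm : ∀ i, MeasurableSet (Z i)) (hZsub : ∀ i, Z i ⊆ Set.Icc 0 1 \ A)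
    (hZdisj : ∀ i i', i ≠ i' → Disjoint (Z i) (Z i'))
    (hYj : (d j + d 0) * (μ j A).toReal / D ≤ (μ j (Y j)).toReal)
    (hYi : ∀ i, i ≠ 0 → i ≠ j →
      d i * (μ i A).toReal / D ≤ (μ i (Y i)).toReal)
    (hZ0 : (d 0 + d 0 ^ 2 / (D - d 0)) * (μ 0 (Set.Icc 0 1 \ A)).toReal / D
      ≤ (μ 0 (Z 0)).toReal)
    (hZj : (d j - d 0 * (d 0 + ε) / (D - (d 0 + ε)))
        * (μ j (Set.Icc 0 1 \ A)).toReal / D ≤ (μ j (Z j)).toReal)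
    (hZi : ∀ i, i ≠ 0 → i ≠ j →
      d i * (μ i (Set.Icc 0 1 \ A)).toReal / D ≤ (μ i (Z i)).toReal) :
    ∀ i, d i ≤ (μ i (Y i ∪ Z i)).toReal := by

  have hD : 0 < D := by
    rw [← hsum]
    exact Finset.sum_pos (fun i _ => hd i) Finset.univ_nonempty
  have hdiff : ∀ i, (μ i (Set.Icc 0 1 \ A)).toReal = D - (μ i A).toReal := by
    intro i
    rw [measure_diff hAsub hAm.nullMeasurableSet (measure_ne_top _ _),
      ENNReal.toReal_sub_of_le (measure_mono hAsub) (measure_ne_top _ _), htot i]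
  have hmem : ∀ i, ∀ S : Set ℝ, (μ i S).toReal = ENNReal.toReal (μ i S) := fun _ _ => rfl
  have hunion : ∀ i, (μ i (Y i ∪ Z i)).toReal = (μ i (Y i)).toReal + (μ i (Z i)).toReal := by
    intro i
    have hdsj : Disjoint (Y i) (Z i) :=
      Set.disjoint_of_subset (hYsub i) (hZsub i) Set.disjoint_sdiff_right
    rw [measure_union hdsj (hZm i), ENNReal.toReal_add (measure_ne_top _ _) (measure_ne_top _ _)]
  have hd0 : d 0 < D := by linarith [hε]
  intro i
  rcases eq_or_ne i 0 with rfl | hi0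
  · have h0 : (d 0 + d 0 ^ 2 / (D - d 0)) * (μ 0 (Set.Icc 0 1 \ A)).toReal / D = d 0 := by
      have h1 : D - d 0 ≠ 0 := by linarith
      rw [hdiff, hA0]
      field_simp
      ring
    have := hZ0
    rw [h0] at this
    have hy : 0 ≤ (μ 0 (Y 0)).toReal := ENNReal.toReal_nonneg
    rw [hunion]; linarith
  · rcases eq_or_ne i j with rfl | hij
    · rw [hunion]
      have h1 := hYj
      have h2 := hZj
      rw [hdiff, hAj] at h2
      rw [hAj] at h1
      have key : (d i + d 0) * (d 0 + ε) / D
          + (d i - d 0 * (d 0 + ε) / (D - (d 0 + ε))) * (D - (d 0 + ε)) / D = d i := by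
        have h3 : D - (d 0 + ε) ≠ 0 := by linarith
        field_simp
        ring
      linarith
    · rw [hunion]
      have h1 := hYi i hi0 hij
      have h2 := hZi i hi0 hij
      rw [hdiff] at h2
      have key : d i * (μ i A).toReal / D + d i * (D - (μ i A).toReal) / D = d i := by
        field_simp
        ring
      linarith
end
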